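/- arXiv:2211.12028 — 4 statements merged into one kernel-verified Lean document; each statement's English description precedes it below -/
import Mathlib

section
/- Let c > 0, let p ∈ ℝⁿ be a unit vector, let h : ℝ → ℝ be integrable with h(τ) = 0 for all τ < 1, and let f ∈ L¹(ℝⁿ) be supported in the closed unit ball {x : ‖x‖ ≤ 1}. Then for every ω ∈ ℝ and every d ∈ ℝⁿ, ∫_{ℝⁿ} ∫₀^∞ h(ct − p·x) f(x) e^{i(ωt + d·x)} dt dx = (1/c) ĥ(ω/c) f̂(d + (ω/c)p), where ĥ(ζ) = ∫_ℝ h(τ) e^{iζτ} dτ and f̂(ξ) = ∫_{ℝⁿ} f(x) e^{i ξ·x} dx. -/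
open MeasureTheory Set Complex
open scoped RealInnerProductSpace

private lemma planeWave_key (c ω a b : ℝ) (hc : 0 < c) (ha : -1 ≤ a)
    (h : ℝ → ℝ) (hzero : ∀ τ < (1 : ℝ), h τ = 0) (C : ℂ) :
    (∫ t in Ioi (0 : ℝ), (h (c * t - a) : ℂ) * C *
        Complex.exp (Complex.I * ((ω * t + b : ℝ) : ℂ)))
      = (1 / (c : ℂ)) * (∫ τ : ℝ, (h τ : ℂ) * Complex.exp (Complex.I * (((ω / c) * τ : ℝ) : ℂ)))
        * (C * Complex.exp (Complex.I * ((b + (ω / c) * a : ℝ) : ℂ))) := by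
  have hc' : (c : ℝ) ≠ 0 := hc.ne'
  set F : ℝ → ℂ := fun u => (h u : ℂ) * C *
      Complex.exp (Complex.I * (((ω / c) * u + ((ω / c) * a + b) : ℝ) : ℂ)) with hF
  have e0 : (fun t : ℝ => (h (c * t - a) : ℂ) * C *
      Complex.exp (Complex.I * ((ω * t + b : ℝ) : ℂ))) = fun t => F (c * t - a) := by
    funext t
    simp only [hF]
    congr 2
    have hcC : (c : ℂ) ≠ 0 := Complex.ofReal_ne_zero.mpr hc'
    push_cast
    field_simp
    ring
  have e1 : (∫ t in Ioi (0 : ℝ), (h (c * t - a) : ℂ) * C *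
      Complex.exp (Complex.I * ((ω * t + b : ℝ) : ℂ)))
      = ∫ t : ℝ, F (c * t - a) := by
    rw [e0, ← integral_Ici_eq_integral_Ioi]
    apply setIntegral_eq_integral_of_forall_compl_eq_zero
    intro t ht
    simp only [mem_Ici, not_le] at ht
    have : c * t - a < 1 := by nlinarith
    simp [hF, hzero _ this]
  have e2 : (∫ t : ℝ, F (c * t - a)) = |c⁻¹| • ∫ u : ℝ, F u := by
    have : (fun t : ℝ => F (c * t - a)) = fun t => (fun u => F (u - a)) (c * t) := rfl
    rw [this, MeasureTheory.Measure.integral_comp_mul_left (fun u => F (u - a)) c,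
      integral_sub_right_eq_self F a]
  have e3 : (∫ u : ℝ, F u)
      = (∫ τ : ℝ, (h τ : ℂ) * Complex.exp (Complex.I * (((ω / c) * τ : ℝ) : ℂ)))
        * (C * Complex.exp (Complex.I * (((ω / c) * a + b : ℝ) : ℂ))) := by
    rw [← MeasureTheory.integral_mul_const]
    congr 1
    funext u
    simp only [hF]
    rw [show (((ω / c) * u + ((ω / c) * a + b) : ℝ) : ℂ)
        = (((ω / c) * u : ℝ) : ℂ) + (((ω / c) * a + b : ℝ) : ℂ) by push_cast; ring,
      mul_add, Complex.exp_add]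
    ring
  rw [e1, e2, e3, real_smul, abs_of_pos (inv_pos.mpr hc)]
  push_cast
  rw [show Complex.I * ((ω : ℂ) / c * a + b) = Complex.I * (b + (ω : ℂ) / c * a) by ring]
  ring

/-- For a traveling plane wave `h(ct − p·x)` with `h(τ)=0` for `τ<1` and an integrable density
`f` supported in the closed unit ball, the moment integral
`∫_{ℝⁿ} ∫₀^∞ h(ct − p·x) f(x) e^{i(ωt + d·x)} dt dx` equals
`(1/c) ĥ(ω/c) f̂(d + (ω/c)p)`. -/
theorem planeWave_moment_integral (n : ℕ) (c : ℝ) (hc : 0 < c)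
    (p : EuclideanSpace ℝ (Fin n)) (hp : ‖p‖ = 1)
    (h : ℝ → ℝ) (hint : Integrable h) (hzero : ∀ τ < (1 : ℝ), h τ = 0)
    (f : EuclideanSpace ℝ (Fin n) → ℝ) (hf : Integrable f)
    (hsupp : ∀ x : EuclideanSpace ℝ (Fin n), 1 < ‖x‖ → f x = 0) :
    ∀ ω : ℝ, ∀ d : EuclideanSpace ℝ (Fin n),
      (∫ x : EuclideanSpace ℝ (Fin n), ∫ t in Ioi (0 : ℝ),
          (h (c * t - ⟪p, x⟫) : ℂ) * (f x : ℂ) *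
            Complex.exp (Complex.I * ((ω * t + ⟪d, x⟫ : ℝ) : ℂ))) =
        (1 / (c : ℂ)) * (∫ τ : ℝ, (h τ : ℂ) * Complex.exp (Complex.I * ((ω / c) * τ : ℝ))) *
          ∫ x : EuclideanSpace ℝ (Fin n), (f x : ℂ) *
            Complex.exp (Complex.I * ((⟪d + (ω / c) • p, x⟫ : ℝ) : ℂ)) := by
  intro ω d
  set H : ℂ := ∫ τ : ℝ, (h τ : ℂ) * Complex.exp (Complex.I * ((ω / c) * τ : ℝ)) with hH
  have key : ∀ x : EuclideanSpace ℝ (Fin n),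
      (∫ t in Ioi (0 : ℝ), (h (c * t - ⟪p, x⟫) : ℂ) * (f x : ℂ) *
          Complex.exp (Complex.I * ((ω * t + ⟪d, x⟫ : ℝ) : ℂ)))
        = (1 / (c : ℂ)) * H * ((f x : ℂ) *
            Complex.exp (Complex.I * ((⟪d + (ω / c) • p, x⟫ : ℝ) : ℂ))) := by
    intro x
    by_cases hfx : f x = 0
    · simp [hfx]
    · have hxle : ‖x‖ ≤ 1 := by
        by_contra hx
        exact hfx (hsupp x (lt_of_not_ge hx))
      have hcs : |⟪p, x⟫| ≤ 1 := by
        calc |⟪p, x⟫| ≤ ‖p‖ * ‖x‖ := abs_real_inner_le_norm p x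
        _ ≤ 1 := by rw [hp]; simpa using hxle
      have ha : (-1 : ℝ) ≤ ⟪p, x⟫ := neg_le_of_abs_le hcs
      have := planeWave_key c ω ⟪p, x⟫ ⟪d, x⟫ hc ha h hzero (f x : ℂ)
      rw [this, hH]
      congr 3
      rw [inner_add_left, real_inner_smul_left]
  calc (∫ x : EuclideanSpace ℝ (Fin n), ∫ t in Ioi (0 : ℝ),
          (h (c * t - ⟪p, x⟫) : ℂ) * (f x : ℂ) *
            Complex.exp (Complex.I * ((ω * t + ⟪d, x⟫ : ℝ) : ℂ)))
      = ∫ x : EuclideanSpace ℝ (Fin n), (1 / (c : ℂ)) * H * ((f x : ℂ) *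
          Complex.exp (Complex.I * ((⟪d + (ω / c) • p, x⟫ : ℝ) : ℂ))) := by
        exact integral_congr_ae (Filter.Eventually.of_forall key)
    _ = (1 / (c : ℂ)) * H * ∫ x : EuclideanSpace ℝ (Fin n), (f x : ℂ) *
          Complex.exp (Complex.I * ((⟪d + (ω / c) • p, x⟫ : ℝ) : ℂ)) := by
        rw [MeasureTheory.integral_const_mul]
end

section
/- Let n ≥ 1 and let p ∈ ℝⁿ be a unit vector. Then the image of the map d ↦ d + ‖d‖·p on ℝⁿ equals {ξ ∈ ℝⁿ : ⟨ξ, p⟩ > 0} ∪ {0}. In particular, for every ξ with ⟨ξ, p⟩ > 0 there exists d ∈ ℝⁿ (namely d = ξ − r p with r = ‖ξ‖²/(2⟨ξ,p⟩)) with ‖d‖ = r and d + ‖d‖p = ξ. -/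
open scoped RealInnerProductSpace

/-- The image of the map `d ↦ d + ‖d‖p` on `ℝⁿ` (for a unit vector `p`) is exactly the open
half-space `{ξ : ⟨ξ,p⟩ > 0}` together with the origin; and for `⟨ξ,p⟩ > 0` the preimage is
given explicitly by `d = ξ − rp` with `r = ‖ξ‖²/(2⟨ξ,p⟩)`, which satisfies `‖d‖ = r`. -/
theorem range_add_norm_smul_unit (n : ℕ) (hn : 1 ≤ n)
    (p : EuclideanSpace ℝ (Fin n)) (hp : ‖p‖ = 1) :
    (Set.range fun d : EuclideanSpace ℝ (Fin n) => d + ‖d‖ • p) =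
        {ξ : EuclideanSpace ℝ (Fin n) | 0 < ⟪ξ, p⟫} ∪ {0} ∧
      ∀ ξ : EuclideanSpace ℝ (Fin n), 0 < ⟪ξ, p⟫ →
        ‖ξ - (‖ξ‖ ^ 2 / (2 * ⟪ξ, p⟫)) • p‖ = ‖ξ‖ ^ 2 / (2 * ⟪ξ, p⟫) ∧
        (ξ - (‖ξ‖ ^ 2 / (2 * ⟪ξ, p⟫)) • p) +
          ‖ξ - (‖ξ‖ ^ 2 / (2 * ⟪ξ, p⟫)) • p‖ • p = ξ := by
  have hsnd : ∀ ξ : EuclideanSpace ℝ (Fin n), 0 < ⟪ξ, p⟫ →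
      ‖ξ - (‖ξ‖ ^ 2 / (2 * ⟪ξ, p⟫)) • p‖ = ‖ξ‖ ^ 2 / (2 * ⟪ξ, p⟫) ∧
      (ξ - (‖ξ‖ ^ 2 / (2 * ⟪ξ, p⟫)) • p) +
        ‖ξ - (‖ξ‖ ^ 2 / (2 * ⟪ξ, p⟫)) • p‖ • p = ξ := by
    intro ξ hξ
    set r : ℝ := ‖ξ‖ ^ 2 / (2 * ⟪ξ, p⟫) with hr
    have hc : (0:ℝ) < 2 * ⟪ξ, p⟫ := by linarith
    have hr0 : 0 ≤ r := div_nonneg (sq_nonneg _) hc.le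
    have hrc : r * (2 * ⟪ξ, p⟫) = ‖ξ‖ ^ 2 := div_mul_cancel₀ _ hc.ne'
    have hnorm : ‖ξ - r • p‖ = r := by
      have h1 : ‖ξ - r • p‖ ^ 2 = r ^ 2 := by
        rw [norm_sub_sq_real, norm_smul, real_inner_smul_right, hp]
        simp only [mul_one, Real.norm_eq_abs]
        rw [abs_of_nonneg hr0]
        nlinarith [hrc]
      nlinarith [norm_nonneg (ξ - r • p)]
    refine ⟨hnorm, ?_⟩
    rw [hnorm]
    exact sub_add_cancel ξ (r • p)
  refine ⟨?_, hsnd⟩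
  ext ξ
  simp only [Set.mem_range, Set.mem_union, Set.mem_setOf_eq, Set.mem_singleton_iff]
  constructor
  · rintro ⟨d, rfl⟩
    by_cases hd : d + ‖d‖ • p = 0
    · right; exact hd
    left
    have key : ‖d + ‖d‖ • p‖ ^ 2 = 2 * ‖d‖ * ⟪d + ‖d‖ • p, p⟫ := by
      rw [norm_add_sq_real, norm_smul, real_inner_smul_right, hp, inner_add_left,
        real_inner_smul_left, real_inner_self_eq_norm_sq]
      simp only [mul_one, Real.norm_eq_abs, abs_norm]
      rw [hp]; ring
    have hpos : 0 < ‖d + ‖d‖ • p‖ := norm_pos_iff.mpr hd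
    nlinarith [norm_nonneg d]
  · rintro (h | rfl)
    · exact ⟨_, (hsnd ξ h).2⟩
    · exact ⟨0, by simp⟩
end

section
/- Let c > 0, let p ∈ ℝⁿ be a unit vector, and let h : ℝ → ℝ be integrable with h(τ) = 0 for all τ < 1 and with ĥ(ζ) = ∫_ℝ h(τ)e^{iζτ}dτ ≠ 0 for every ζ ∈ ℝ. Let f ∈ L¹(ℝⁿ) be real-valued and supported in the closed unit ball {x : ‖x‖ ≤ 1}. If for every d ∈ ℝⁿ, ∫_{ℝⁿ} ∫₀^∞ h(ct − p·x) f(x) e^{i(c‖d‖ t + d·x)} dt dx = 0, then f = 0 almost everywhere. -/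
/-!
Since `h` vanishes below `1` and `|⟪p, x⟫| ≤ 1` on the support of `f`, the substitution
`τ = ct − ⟪p, x⟫` turns the `d`-th moment into `c⁻¹ ĥ(‖d‖) F(d + ‖d‖ p)`, where
`F(ξ) = ∫ f(x) e^{i⟪ξ, x⟫} dx`. As `ĥ` has no zeros, `F` vanishes at all points `d + ‖d‖ p`, and
these fill the open half-space `⟪p, ξ⟫ > 0`. Because `f` has bounded support, `s ↦ F(ξ + s p)`
extends to an entire function of `s`, so `F` vanishes everywhere by the identity theorem, and
`f = 0` a.e. by injectivity of the Fourier transform on `L¹`.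
-/

open MeasureTheory Set Complex FourierTransform
open scoped RealInnerProductSpace SchwartzMap

section Oscillatory

variable {α : Type*} [MeasurableSpace α] {μ : Measure α} {w : α → ℂ} {a : α → ℝ} {R : ℝ}

theorem hasDerivAt_integral_mul_cexp_mul (hw : Integrable w μ) (ha : AEStronglyMeasurable a μ)
    (hR : ∀ x, w x ≠ 0 → |a x| ≤ R) (z : ℂ) :
    HasDerivAt (fun z : ℂ => ∫ x, w x * cexp (z * a x) ∂μ)
      (∫ x, w x * a x * cexp (z * a x) ∂μ) z := by
  have hmeas : ∀ z : ℂ, AEStronglyMeasurable (fun x => cexp (z * a x)) μ := fun z =>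
    (by fun_prop : Continuous fun t : ℝ => cexp (z * t)).comp_aestronglyMeasurable ha
  have hexp : ∀ x, w x ≠ 0 → ∀ z : ℂ, ‖cexp (z * a x)‖ ≤ Real.exp (‖z‖ * R) := by
    intro x hx z
    rw [norm_exp, Real.exp_le_exp, re_mul_ofReal]
    calc z.re * a x ≤ |z.re| * |a x| := by rw [← abs_mul]; exact le_abs_self _
      _ ≤ ‖z‖ * R := mul_le_mul (abs_re_le_norm z) (hR x hx) (abs_nonneg _) (norm_nonneg _)
  have hint : Integrable (fun x => w x * cexp (z * a x)) μ := by
    refine (hw.norm.mul_const (Real.exp (‖z‖ * R))).mono' (hw.1.mul (hmeas z))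
      (.of_forall fun x => ?_)
    by_cases hx : w x = 0
    · simp [hx]
    rw [norm_mul]
    gcongr
    exact hexp x hx z
  have hbound : ∀ x, ∀ z' ∈ Metric.ball z 1,
      ‖w x * a x * cexp (z' * a x)‖ ≤ ‖w x‖ * R * Real.exp ((‖z‖ + 1) * R) := by
    intro x z' hz'
    by_cases hx : w x = 0
    · simp [hx]
    have hz' : ‖z'‖ ≤ ‖z‖ + 1 := by
      have := norm_le_norm_add_norm_sub' z' z
      rw [Metric.mem_ball, dist_eq_norm] at hz'
      linarith
    have hR0 : 0 ≤ R := (abs_nonneg _).trans (hR x hx)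
    rw [norm_mul, norm_mul, norm_real, Real.norm_eq_abs]
    gcongr
    · exact hR x hx
    · exact (hexp x hx z').trans (Real.exp_le_exp.2 (by gcongr))
  refine (hasDerivAt_integral_of_dominated_loc_of_deriv_le (Metric.ball_mem_nhds z one_pos)
    (F := fun z x => w x * cexp (z * a x)) (F' := fun z x => w x * a x * cexp (z * a x))
    (.of_forall fun z => hw.1.mul (hmeas z)) hint ?_ (.of_forall hbound)
    ((hw.norm.mul_const _).mul_const _) (.of_forall fun x z' _ => ?_)).2
  · exact (hw.1.mul (continuous_ofReal.comp_aestronglyMeasurable ha)).mul (hmeas z)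
  · have := (((hasDerivAt_id z').mul_const (a x : ℂ)).cexp).const_mul (w x)
    simp only [id, one_mul] at this
    exact this.congr_deriv (by ring)

end Oscillatory

theorem setIntegral_Ioi_comp_mul_sub {E : Type*} [NormedAddCommGroup E] [NormedSpace ℝ E]
    {g : ℝ → E} {c a : ℝ} (hc : 0 < c) (hg : ∀ τ < -a, g τ = 0) :
    ∫ t in Ioi 0, g (c * t - a) = c⁻¹ • ∫ τ, g τ := by
  rw [← integral_Ici_eq_integral_Ioi, setIntegral_eq_integral_of_forall_compl_eq_zero
    fun t ht => hg _ (by linarith [mul_neg_of_pos_of_neg hc (not_le.1 ht)]),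
    Measure.integral_comp_mul_left (fun u => g (u - a)) c, integral_sub_right_eq_self,
    abs_of_pos (inv_pos.2 hc)]

theorem exists_add_norm_smul_eq {V : Type*} [NormedAddCommGroup V] [InnerProductSpace ℝ V]
    {p ξ : V} (hp : ‖p‖ = 1) (hξ : 0 < ⟪p, ξ⟫) : ∃ d : V, d + ‖d‖ • p = ξ := by
  set s := ‖ξ‖ ^ 2 / (2 * ⟪p, ξ⟫)
  have hs : 0 ≤ s := by positivity
  have hsξ : 2 * (s * ⟪p, ξ⟫) = ‖ξ‖ ^ 2 := by
    simp only [s]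
    field_simp
  have hnorm : ‖ξ - s • p‖ = s := by
    rw [← sq_eq_sq₀ (norm_nonneg _) hs, norm_sub_sq_real, real_inner_smul_right, norm_smul, hp,
      Real.norm_of_nonneg hs, real_inner_comm, hsξ]
    ring
  exact ⟨ξ - s • p, by rw [hnorm, sub_add_cancel]⟩

section ExpTransform

variable {V : Type*} [NormedAddCommGroup V] [InnerProductSpace ℝ V] [FiniteDimensional ℝ V]
  [MeasurableSpace V] [BorelSpace V]

/-- The Fourier transform with the paper's convention `e^{+i⟪ξ, x⟫}`; Mathlib's `𝓕` uses
`e^{-2πi⟪x, ξ⟫}` (see `expTransform_eq_fourier`). -/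
noncomputable def expTransform (f : V → ℂ) (ξ : V) : ℂ :=
  ∫ x, f x * cexp (I * ⟪ξ, x⟫)

theorem analyticOnNhd_expTransform_add_smul {f : V → ℂ} {p : V} {R : ℝ} (hf : Integrable f)
    (hR : ∀ x, f x ≠ 0 → |⟪p, x⟫| ≤ R) (ξ : V) :
    AnalyticOnNhd ℝ (fun s : ℝ => expTransform f (ξ + s • p)) univ := by
  set w : V → ℂ := fun x => f x * cexp (I * ⟪ξ, x⟫)
  have hw : Integrable w := hf.mul_bdd (by fun_prop) (.of_forall fun x => by
    rw [mul_comm, norm_exp_ofReal_mul_I])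
  have hwR : ∀ x, w x ≠ 0 → |⟪p, x⟫| ≤ R := fun x hx => hR x (left_ne_zero_of_mul hx)
  set G : ℂ → ℂ := fun z => ∫ x, w x * cexp (z * ⟪p, x⟫)
  have hG : Differentiable ℂ G := fun z =>
    (hasDerivAt_integral_mul_cexp_mul hw (by fun_prop) hwR z).differentiableAt
  have hline : (fun s : ℝ => expTransform f (ξ + s • p)) = fun s : ℝ => G (I * s) := by
    funext s
    refine integral_congr_ae (.of_forall fun x => ?_)
    simp only [w, inner_add_left, real_inner_smul_left, ofReal_add, ofReal_mul, mul_add,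
      Complex.exp_add]
    ring_nf
  rw [hline]
  intro s _
  exact (hG.analyticAt _).restrictScalars.comp (analyticAt_const.mul (ofRealCLM.analyticAt s))

theorem expTransform_eq_zero_of_forall_inner_pos {f : V → ℂ} {p : V} {R : ℝ} (hf : Integrable f)
    (hR : ∀ x, f x ≠ 0 → |⟪p, x⟫| ≤ R) (hp : p ≠ 0)
    (hpos : ∀ ξ, 0 < ⟪p, ξ⟫ → expTransform f ξ = 0) (ξ : V) : expTransform f ξ = 0 := by
  set s₀ := -⟪p, ξ⟫ / ‖p‖ ^ 2
  have hray : ∀ s, s₀ < s → expTransform f (ξ + s • p) = 0 := fun s hs => hpos _ <| by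
    rw [div_lt_iff₀ (by positivity)] at hs
    rw [inner_add_right, real_inner_smul_right, real_inner_self_eq_norm_sq]
    linarith
  have hline := (analyticOnNhd_expTransform_add_smul hf hR ξ)
    |>.eqOn_zero_of_preconnected_of_eventuallyEq_zero isPreconnected_univ (mem_univ (s₀ + 1))
      (Filter.eventually_of_mem (Ioi_mem_nhds (lt_add_one s₀)) hray) (mem_univ 0)
  simpa using hline

theorem integral_setIntegral_Ioi_eq_mul_expTransform {h : ℝ → ℂ} {f : V → ℂ} {c ζ : ℝ} {p : V}
    (hc : 0 < c) (hzero : ∀ τ < 1, h τ = 0) (hsupp : ∀ x, f x ≠ 0 → -1 ≤ ⟪p, x⟫) (d : V) :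
    ∫ x, ∫ t in Ioi 0, h (c * t - ⟪p, x⟫) * f x * cexp (I * ((c * ζ * t + ⟪d, x⟫ : ℝ) : ℂ))
      = (c : ℂ)⁻¹ * (∫ τ, h τ * cexp (I * (ζ * τ : ℝ))) * expTransform f (d + ζ • p) := by
  rw [expTransform, ← integral_const_mul]
  refine integral_congr_ae (.of_forall fun x => ?_)
  by_cases hx : f x = 0
  · simp [hx]
  have hshift : ∀ t : ℝ, cexp (I * ((c * ζ * t + ⟪d, x⟫ : ℝ) : ℂ))
      = cexp (I * ⟪d + ζ • p, x⟫) * cexp (I * (ζ * (c * t - ⟪p, x⟫) : ℝ)) := fun t => by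
    rw [← Complex.exp_add, inner_add_left, real_inner_smul_left]
    push_cast
    ring_nf
  have hinner := setIntegral_Ioi_comp_mul_sub (a := ⟪p, x⟫)
    (g := fun τ => h τ * cexp (I * (ζ * τ : ℝ))) hc
    fun τ hτ => by simp [hzero τ (by linarith [hsupp x hx])]
  calc ∫ t in Ioi 0, h (c * t - ⟪p, x⟫) * f x * cexp (I * ((c * ζ * t + ⟪d, x⟫ : ℝ) : ℂ))
      = ∫ t in Ioi 0, f x * cexp (I * ⟪d + ζ • p, x⟫) *
          (h (c * t - ⟪p, x⟫) * cexp (I * (ζ * (c * t - ⟪p, x⟫) : ℝ))) := by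
        congr 1
        funext t
        rw [hshift]
        ring
    _ = _ := by
      rw [integral_const_mul, hinner, Complex.real_smul, ofReal_inv]
      ring

theorem expTransform_eq_fourier (f : V → ℂ) (ξ : V) :
    expTransform f ξ = 𝓕 f (-(2 * Real.pi)⁻¹ • ξ) := by
  rw [expTransform, Real.fourier_eq' f]
  congr 1
  funext x
  rw [smul_eq_mul, mul_comm, real_inner_smul_right, real_inner_comm]
  congr 2
  push_cast
  field_simp

theorem MeasureTheory.Integrable.ae_eq_zero_of_fourier_eq_zero {f : V → ℂ} (hf : Integrable f)
    (h : 𝓕 f = 0) : ∀ᵐ x, f x = 0 := by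
  refine ae_eq_zero_of_integral_contDiff_smul_eq_zero hf.locallyIntegrable fun g hg hgc => ?_
  set φ : 𝓢(V, ℂ) := (hgc.comp_left ofReal_zero).toSchwartzMap (ofRealCLM.contDiff.comp hg)
  -- Pair `f` with `ψ = 𝓕⁻ φ`: `∫ f • φ = ∫ f • 𝓕 ψ = ∫ 𝓕 f • ψ = 0`.
  set ψ : 𝓢(V, ℂ) := 𝓕⁻ φ
  have hpair := VectorFourier.integral_fourierIntegral_smul_eq_flip (L := innerₗ V)
    Real.continuous_fourierChar continuous_inner hf (ψ.integrable (μ := volume))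
  rw [flip_innerₗ] at hpair
  change ∫ ξ, 𝓕 f ξ • ψ ξ = ∫ x, f x • 𝓕 ⇑ψ x at hpair
  rw [h, ← SchwartzMap.fourier_coe, show 𝓕 ψ = φ from FourierInvPair.fourier_fourierInv_eq φ]
    at hpair
  simp only [Pi.zero_apply, zero_smul, integral_zero] at hpair
  rw [hpair]
  congr 1
  funext x
  rw [Complex.real_smul, smul_eq_mul, mul_comm]
  rfl

theorem ae_eq_zero_of_expTransform_eq_zero {f : V → ℂ} (hf : Integrable f)
    (h : ∀ ξ, expTransform f ξ = 0) : ∀ᵐ x, f x = 0 := by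
  refine hf.ae_eq_zero_of_fourier_eq_zero (funext fun ξ => ?_)
  have hξ := h (-(2 * Real.pi) • ξ)
  rwa [expTransform_eq_fourier, smul_smul, neg_mul_neg, inv_mul_cancel₀ (by positivity),
    one_smul] at hξ

end ExpTransform

theorem inverse_source_uniqueness_general (n : ℕ) (c : ℝ) (hc : 0 < c)
    (p : EuclideanSpace ℝ (Fin n)) (hp : ‖p‖ = 1)
    (h : ℝ → ℝ) (hzero : ∀ τ < (1 : ℝ), h τ = 0)
    (hhat : ∀ ζ : ℝ, (∫ τ : ℝ, (h τ : ℂ) * Complex.exp (Complex.I * (ζ * τ : ℝ))) ≠ 0)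
    (f : EuclideanSpace ℝ (Fin n) → ℝ) (hf : Integrable f)
    (hsupp : ∀ x : EuclideanSpace ℝ (Fin n), 1 < ‖x‖ → f x = 0)
    (hmoment : ∀ d : EuclideanSpace ℝ (Fin n),
      (∫ x : EuclideanSpace ℝ (Fin n), ∫ t in Ioi (0 : ℝ),
        (h (c * t - ⟪p, x⟫) : ℂ) * (f x : ℂ) *
          Complex.exp (Complex.I * ((c * ‖d‖ * t + ⟪d, x⟫ : ℝ) : ℂ))) = 0) :
    ∀ᵐ x, f x = 0 := by
  have hbound : ∀ x, (f x : ℂ) ≠ 0 → |⟪p, x⟫| ≤ 1 := fun x hx =>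
    calc |⟪p, x⟫| ≤ ‖p‖ * ‖x‖ := abs_real_inner_le_norm p x
      _ ≤ 1 := by
        rw [hp, one_mul]
        exact not_lt.1 fun h1 => hx (by rw [hsupp x h1, ofReal_zero])
  have hhalf : ∀ ξ, 0 < ⟪p, ξ⟫ → expTransform (fun x => (f x : ℂ)) ξ = 0 := by
    intro ξ hξ
    obtain ⟨d, rfl⟩ := exists_add_norm_smul_eq hp hξ
    have hd := hmoment d
    rw [integral_setIntegral_Ioi_eq_mul_expTransform (h := fun τ => (h τ : ℂ)) hc
      (fun τ hτ => by simp [hzero τ hτ]) (fun x hx => (abs_le.1 (hbound x hx)).1)] at hd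
    exact (mul_eq_zero.1 hd).resolve_left (mul_ne_zero (by simpa using hc.ne') (hhat ‖d‖))
  have hall := expTransform_eq_zero_of_forall_inner_pos hf.ofReal hbound
    (norm_ne_zero_iff.1 (hp ▸ one_ne_zero)) hhalf
  filter_upwards [ae_eq_zero_of_expTransform_eq_zero hf.ofReal hall] with x hx
  simpa using hx

/-- Injectivity of the forward operator for traveling plane-wave illumination: if
`h(τ) = 0` for `τ < 1`, the Fourier transform of `h` never vanishes, `f` is real-valued,
integrable, supported in the closed unit ball, and all the moment conditions
`∫_{ℝⁿ} ∫₀^∞ h(ct − p·x) f(x) e^{i(c‖d‖t + d·x)} dt dx = 0` (for `d ∈ ℝⁿ`) hold, then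
`f = 0` almost everywhere. -/
theorem inverse_source_uniqueness (n : ℕ) (c : ℝ) (hc : 0 < c)
    (p : EuclideanSpace ℝ (Fin n)) (hp : ‖p‖ = 1)
    (h : ℝ → ℝ) (hint : Integrable h) (hzero : ∀ τ < (1 : ℝ), h τ = 0)
    (hhat : ∀ ζ : ℝ, (∫ τ : ℝ, (h τ : ℂ) * Complex.exp (Complex.I * (ζ * τ : ℝ))) ≠ 0)
    (f : EuclideanSpace ℝ (Fin n) → ℝ) (hf : Integrable f)
    (hsupp : ∀ x : EuclideanSpace ℝ (Fin n), 1 < ‖x‖ → f x = 0)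
    (hmoment : ∀ d : EuclideanSpace ℝ (Fin n),
      (∫ x : EuclideanSpace ℝ (Fin n), ∫ t in Ioi (0 : ℝ),
        (h (c * t - ⟪p, x⟫) : ℂ) * (f x : ℂ) *
          Complex.exp (Complex.I * ((c * ‖d‖ * t + ⟪d, x⟫ : ℝ) : ℂ))) = 0) :
    ∀ᵐ x, f x = 0 :=
  inverse_source_uniqueness_general n c hc p hp h hzero hhat f hf hsupp hmoment
end

section
/- Let Ω ⊂ ℝ³ be a bounded measurable set, Γ ⊂ ℝ³ a compact set with dist(Γ, Ω) > 0, σ a finite Borel measure on Γ, T > 0, c > 0, and λ : ℝ³ × ℝ → ℝ a bounded measurable function with λ(y,t) = 0 for t ≤ 0. Let f ∈ L¹(Ω) and let V : Γ × ℝ → ℝ be bounded measurable with V(x,t) = 0 for t ∉ (0,T]. Define (ℱf)(x,t) = ∫_Ω λ(y, t − ‖x−y‖/c) f(y) / (4π‖x−y‖) dy and W(y,s) = ∫_Γ V(x, s + ‖x−y‖/c) / (4π‖x−y‖) dσ(x). Then ∫₀^T ∫_Γ (ℱf)(x,t) V(x,t) dσ(x) dt = ∫_Ω f(y) ( ∫₀^T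 λ(y,s) W(y,s) ds ) dy. -/
/-!
Both sides are integrals over `(0,T] × Γ × Ω` of `λ · V · f / (4π‖x−y‖)`, whose kernel is bounded
because `‖x−y‖ ≥ m` on `Γ × Ω`; Fubini reorders the integrations, and for fixed `(x,y)` the
substitution `t = s + ‖x−y‖/c` trades the retarded time for the advanced one. It keeps the window
`(0,T]` because `λ(y,·)` vanishes on `(−∞,0]`, `V(x,·)` vanishes off `(0,T]` and the delay is
nonnegative.
-/

open MeasureTheory Set Real

theorem setIntegral_Ioc_comp_sub_mul {g h : ℝ → ℝ} {T a : ℝ} (ha : 0 ≤ a)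
    (hg : ∀ s ≤ 0, g s = 0) (hh : ∀ t ∉ Ioc (0 : ℝ) T, h t = 0) :
    ∫ t in Ioc (0 : ℝ) T, g (t - a) * h t = ∫ s in Ioc (0 : ℝ) T, g s * h (s + a) := by
  have hvanish : ∀ s ∉ Ioc (0 : ℝ) T, g s * h (s + a) = 0 := by
    intro s hs
    rcases le_or_gt s 0 with hs0 | hs0
    · rw [hg s hs0, zero_mul]
    · rw [hh (s + a) fun hsa => hs ⟨hs0, by linarith [hsa.2]⟩, mul_zero]
  calc ∫ t in Ioc (0 : ℝ) T, g (t - a) * h t = ∫ t, g (t - a) * h t :=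
        setIntegral_eq_integral_of_forall_compl_eq_zero fun t ht => by rw [hh t ht, mul_zero]
    _ = ∫ s, g s * h (s + a) := by
        simpa using integral_sub_right_eq_self (fun s => g s * h (s + a)) a
    _ = ∫ s in Ioc (0 : ℝ) T, g s * h (s + a) :=
        (setIntegral_eq_integral_of_forall_compl_eq_zero hvanish).symm

section RetardedPotential

variable {X Y : Type*} [MeasurableSpace X] [MeasurableSpace Y] {μ : Measure X} {ν : Measure Y}
  [IsFiniteMeasure μ] [SFinite ν] {lam : Y → ℝ → ℝ} {V : X → ℝ → ℝ} {D k : X → Y → ℝ}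
  {f : Y → ℝ} {T Cl Cv Ck : ℝ}

lemma integrable_retarded_integrand (hlam : Measurable (Function.uncurry lam))
    (hV : Measurable (Function.uncurry V)) (hD : Measurable (Function.uncurry D))
    (hk : Measurable (Function.uncurry k)) (hlamC : ∀ y t, |lam y t| ≤ Cl)
    (hVC : ∀ x t, |V x t| ≤ Cv) (hkC : ∀ᵐ p ∂μ.prod ν, |k p.1 p.2| ≤ Ck) (hf : Integrable f ν) :
    Integrable (fun p : ℝ × X × Y =>
        lam p.2.2 (p.1 - D p.2.1 p.2.2) * f p.2.2 * k p.2.1 p.2.2 * V p.2.1 p.1)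
      ((volume.restrict (Ioc 0 T)).prod (μ.prod ν)) := by
  have hmeas : Measurable fun p : ℝ × X × Y =>
      lam p.2.2 (p.1 - D p.2.1 p.2.2) * k p.2.1 p.2.2 * V p.2.1 p.1 :=
    ((hlam.comp (measurable_snd.snd.prodMk (measurable_fst.sub (hD.comp measurable_snd)))).mul
      (hk.comp measurable_snd)).mul (hV.comp (measurable_snd.fst.prodMk measurable_fst))
  have hbound : ∀ᵐ p ∂(volume.restrict (Ioc 0 T)).prod (μ.prod ν),
      ‖lam p.2.2 (p.1 - D p.2.1 p.2.2) * k p.2.1 p.2.2 * V p.2.1 p.1‖ ≤ Cl * Ck * Cv := by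
    filter_upwards [Measure.quasiMeasurePreserving_snd.ae hkC] with p hp
    exact norm_mul_le_of_le (norm_mul_le_of_le (hlamC _ _) hp) (hVC _ _)
  refine ((hf.comp_snd μ).comp_snd _).bdd_mul hmeas.aestronglyMeasurable hbound |>.congr ?_
  exact .of_forall fun p => by ring

lemma ae_integrable_advanced_integrand (hlam : Measurable (Function.uncurry lam))
    (hV : Measurable (Function.uncurry V)) (hD : Measurable (Function.uncurry D))
    (hk : Measurable (Function.uncurry k)) (hlamC : ∀ y t, |lam y t| ≤ Cl)
    (hVC : ∀ x t, |V x t| ≤ Cv) (hkC : ∀ᵐ p ∂μ.prod ν, |k p.1 p.2| ≤ Ck) :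
    ∀ᵐ y ∂ν, Integrable (Function.uncurry fun x s => lam y s * V x (s + D x y) * k x y)
      (μ.prod (volume.restrict (Ioc 0 T))) := by
  have hkC' : ∀ᵐ y ∂ν, ∀ᵐ x ∂μ, |k x y| ≤ Ck :=
    Measure.ae_ae_of_ae_prod (Measure.measurePreserving_swap.quasiMeasurePreserving.ae hkC)
  filter_upwards [hkC'] with y hy
  refine Integrable.of_bound ?_ (Cl * Cv * Ck) ?_
  · exact (((hlam.comp (measurable_const.prodMk measurable_snd)).mul
      (hV.comp (measurable_fst.prodMk (measurable_snd.add
        (hD.comp (measurable_fst.prodMk measurable_const)))))).mul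
      (hk.comp (measurable_fst.prodMk measurable_const))).aestronglyMeasurable
  · filter_upwards [Measure.quasiMeasurePreserving_fst.ae hy] with q hq
    exact norm_mul_le_of_le (norm_mul_le_of_le (hlamC _ _) (hVC _ _)) hq


theorem integral_retarded_mul_eq_integral_mul_advanced (hlam : Measurable (Function.uncurry lam))
    (hV : Measurable (Function.uncurry V)) (hD : Measurable (Function.uncurry D))
    (hk : Measurable (Function.uncurry k)) (hlamC : ∀ y t, |lam y t| ≤ Cl)
    (hVC : ∀ x t, |V x t| ≤ Cv) (hkC : ∀ᵐ p ∂μ.prod ν, |k p.1 p.2| ≤ Ck) (hf : Integrable f ν)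
    (hlam0 : ∀ y, ∀ t ≤ (0 : ℝ), lam y t = 0) (hV0 : ∀ x, ∀ t ∉ Ioc (0 : ℝ) T, V x t = 0)
    (hD0 : ∀ x y, 0 ≤ D x y) :
    ∫ t in Ioc (0 : ℝ) T, ∫ x, (∫ y, lam y (t - D x y) * f y * k x y ∂ν) * V x t ∂μ =
      ∫ y, f y * (∫ s in Ioc (0 : ℝ) T, lam y s * ∫ x, V x (s + D x y) * k x y ∂μ) ∂ν := by
  have hG := integrable_retarded_integrand (T := T) hlam hV hD hk hlamC hVC hkC hf
  have hshift : ∀ p : X × Y, ∫ t in Ioc (0 : ℝ) T,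
      lam p.2 (t - D p.1 p.2) * f p.2 * k p.1 p.2 * V p.1 t =
        f p.2 * ∫ s in Ioc (0 : ℝ) T, lam p.2 s * V p.1 (s + D p.1 p.2) * k p.1 p.2 := by
    intro p
    calc ∫ t in Ioc (0 : ℝ) T, lam p.2 (t - D p.1 p.2) * f p.2 * k p.1 p.2 * V p.1 t
        = (∫ t in Ioc (0 : ℝ) T, lam p.2 (t - D p.1 p.2) * V p.1 t) * (f p.2 * k p.1 p.2) := by
          rw [← integral_mul_const]; congr 1; funext t; ring
      _ = (∫ s in Ioc (0 : ℝ) T, lam p.2 s * V p.1 (s + D p.1 p.2)) * (f p.2 * k p.1 p.2) := by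
          rw [setIntegral_Ioc_comp_sub_mul (hD0 p.1 p.2) (hlam0 p.2) (hV0 p.1)]
      _ = f p.2 * ∫ s in Ioc (0 : ℝ) T, lam p.2 s * V p.1 (s + D p.1 p.2) * k p.1 p.2 := by
          rw [← integral_mul_const, ← integral_const_mul]; congr 1; funext s; ring
  calc ∫ t in Ioc (0 : ℝ) T, ∫ x, (∫ y, lam y (t - D x y) * f y * k x y ∂ν) * V x t ∂μ
      = ∫ t in Ioc (0 : ℝ) T, ∫ p, lam p.2 (t - D p.1 p.2) * f p.2 * k p.1 p.2 * V p.1 t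
          ∂μ.prod ν := by
        refine integral_congr_ae ?_
        filter_upwards [hG.prod_right_ae] with t ht
        simp_rw [integral_prod _ ht, integral_mul_const]
    _ = ∫ p, (∫ t in Ioc (0 : ℝ) T, lam p.2 (t - D p.1 p.2) * f p.2 * k p.1 p.2 * V p.1 t)
          ∂μ.prod ν := integral_integral_swap hG
    _ = ∫ y, ∫ x, f y * (∫ s in Ioc (0 : ℝ) T, lam y s * V x (s + D x y) * k x y) ∂μ ∂ν := by
        simp_rw [hshift]
        exact integral_prod_symm _ (hG.integral_prod_right.congr (.of_forall hshift))
    _ = ∫ y, f y * (∫ s in Ioc (0 : ℝ) T, lam y s * ∫ x, V x (s + D x y) * k x y ∂μ) ∂ν := by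
        refine integral_congr_ae ?_
        filter_upwards [ae_integrable_advanced_integrand (T := T) hlam hV hD hk hlamC hVC hkC]
          with y hy
        simp_rw [integral_const_mul, integral_integral_swap hy, mul_assoc, integral_const_mul]

end RetardedPotential

theorem forwardOp_adjoint_identity_general
    (Ω : Set (EuclideanSpace ℝ (Fin 3))) (hΩmeas : MeasurableSet Ω)
    (Γ : Set (EuclideanSpace ℝ (Fin 3))) (hΓ : IsCompact Γ)
    (m : ℝ) (hm : 0 < m) (hsep : ∀ x ∈ Γ, ∀ y ∈ Ω, m ≤ dist x y)
    (σ : Measure (EuclideanSpace ℝ (Fin 3))) [IsFiniteMeasure σ]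
    (T : ℝ) (c : ℝ) (hc : 0 < c)
    (lam : EuclideanSpace ℝ (Fin 3) → ℝ → ℝ)
    (hlamMeas : Measurable fun p : EuclideanSpace ℝ (Fin 3) × ℝ => lam p.1 p.2)
    (hlamBdd : ∃ C, ∀ y t, |lam y t| ≤ C)
    (hlam0 : ∀ y, ∀ t ≤ (0 : ℝ), lam y t = 0)
    (f : EuclideanSpace ℝ (Fin 3) → ℝ) (hf : Integrable f (volume.restrict Ω))
    (V : EuclideanSpace ℝ (Fin 3) → ℝ → ℝ)
    (hVMeas : Measurable fun p : EuclideanSpace ℝ (Fin 3) × ℝ => V p.1 p.2)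
    (hVBdd : ∃ C, ∀ x t, |V x t| ≤ C)
    (hV0 : ∀ x : EuclideanSpace ℝ (Fin 3), ∀ t : ℝ, t ∉ Ioc (0 : ℝ) T → V x t = 0)
    (F : EuclideanSpace ℝ (Fin 3) → ℝ → ℝ)
    (hF : ∀ x t, F x t = ∫ y in Ω, lam y (t - dist x y / c) * f y / (4 * π * dist x y))
    (W : EuclideanSpace ℝ (Fin 3) → ℝ → ℝ)
    (hW : ∀ y s, W y s = ∫ x in Γ, V x (s + dist x y / c) / (4 * π * dist x y) ∂σ) :
    (∫ t in Ioc (0 : ℝ) T, ∫ x in Γ, F x t * V x t ∂σ) =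
      ∫ y in Ω, f y * ∫ s in Ioc (0 : ℝ) T, lam y s * W y s := by
  obtain ⟨Cl, hCl⟩ := hlamBdd
  obtain ⟨Cv, hCv⟩ := hVBdd
  have hkernel : ∀ᵐ p ∂(σ.restrict Γ).prod (volume.restrict Ω),
      |(4 * π * dist p.1 p.2)⁻¹| ≤ (4 * π * m)⁻¹ := by
    rw [Measure.prod_restrict]
    refine ae_restrict_of_forall_mem (hΓ.measurableSet.prod hΩmeas) fun p hp => ?_
    have hmp := hsep _ hp.1 _ hp.2
    have hd : 0 < dist p.1 p.2 := hm.trans_le hmp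
    rw [abs_of_pos (by positivity)]
    exact inv_anti₀ (by positivity) (by gcongr)
  have key := integral_retarded_mul_eq_integral_mul_advanced (μ := σ.restrict Γ)
    (D := fun x y => dist x y / c) (k := fun x y => (4 * π * dist x y)⁻¹) hlamMeas hVMeas
    (measurable_dist.div_const c) (measurable_dist.const_mul (4 * π)).inv hCl hCv hkernel hf
    hlam0 hV0 fun x y => div_nonneg dist_nonneg hc.le
  simp only [← div_eq_mul_inv] at key
  simp only [hF, hW]
  exact key

/-- The adjoint identity for the forward operator of the flow-measurement model: with
`(ℱf)(x,t) = ∫_Ω λ(y, t − ‖x−y‖/c) f(y)/(4π‖x−y‖) dy` and the time-reversed potential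
`W(y,s) = ∫_Γ V(x, s + ‖x−y‖/c)/(4π‖x−y‖) dσ(x)`, one has
`∫₀^T ∫_Γ (ℱf) V dσ dt = ∫_Ω f(y) (∫₀^T λ(y,s) W(y,s) ds) dy`, i.e.
`(ℱ*V)(y) = ∫₀^T λ(y,s) W(y,s) ds`. -/
theorem forwardOp_adjoint_identity
    (Ω : Set (EuclideanSpace ℝ (Fin 3))) (hΩmeas : MeasurableSet Ω)
    (hΩbdd : Bornology.IsBounded Ω)
    (Γ : Set (EuclideanSpace ℝ (Fin 3))) (hΓ : IsCompact Γ)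
    (m : ℝ) (hm : 0 < m) (hsep : ∀ x ∈ Γ, ∀ y ∈ Ω, m ≤ dist x y)
    (σ : Measure (EuclideanSpace ℝ (Fin 3))) [IsFiniteMeasure σ]
    (T : ℝ) (hT : 0 < T) (c : ℝ) (hc : 0 < c)
    (lam : EuclideanSpace ℝ (Fin 3) → ℝ → ℝ)
    (hlamMeas : Measurable fun p : EuclideanSpace ℝ (Fin 3) × ℝ => lam p.1 p.2)
    (hlamBdd : ∃ C, ∀ y t, |lam y t| ≤ C)
    (hlam0 : ∀ y, ∀ t ≤ (0 : ℝ), lam y t = 0)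
    (f : EuclideanSpace ℝ (Fin 3) → ℝ) (hf : Integrable f (volume.restrict Ω))
    (V : EuclideanSpace ℝ (Fin 3) → ℝ → ℝ)
    (hVMeas : Measurable fun p : EuclideanSpace ℝ (Fin 3) × ℝ => V p.1 p.2)
    (hVBdd : ∃ C, ∀ x t, |V x t| ≤ C)
    (hV0 : ∀ x : EuclideanSpace ℝ (Fin 3), ∀ t : ℝ, t ∉ Ioc (0 : ℝ) T → V x t = 0)
    (F : EuclideanSpace ℝ (Fin 3) → ℝ → ℝ)
    (hF : ∀ x t, F x t = ∫ y in Ω, lam y (t - dist x y / c) * f y / (4 * π * dist x y))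
    (W : EuclideanSpace ℝ (Fin 3) → ℝ → ℝ)
    (hW : ∀ y s, W y s = ∫ x in Γ, V x (s + dist x y / c) / (4 * π * dist x y) ∂σ) :
    (∫ t in Ioc (0 : ℝ) T, ∫ x in Γ, F x t * V x t ∂σ) =
      ∫ y in Ω, f y * ∫ s in Ioc (0 : ℝ) T, lam y s * W y s :=
  forwardOp_adjoint_identity_general Ω hΩmeas Γ hΓ m hm hsep σ T c hc lam hlamMeas hlamBdd hlam0 f
    hf V hVMeas hVBdd hV0 F hF W hW
end
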